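/- Let X be a real random variable with E[X] = 0 and E[|X|³] < ∞, let σ > 0, ε > 0 and u ∈ ℝ. Then | Var( Ψ((u − εX)/σ) ) − ε² E[X²] (Ψ'(u/σ))²/σ² | ≤ ε³ E[|X|³]/σ³. -/

import Mathlib

open MeasureTheory ProbabilityTheory

/-- The standard Gaussian tail function `Ψ(x) = (2π)^{-1/2} ∫_x^∞ e^{-t²/2} dt`. -/
noncomputable def Psi (x : ℝ) : ℝ :=
  ∫ t in Set.Ioi x, (Real.sqrt (2 * Real.pi))⁻¹ * Real.exp (-t ^ 2 / 2)

/-- First derivative of the Gaussian tail: `Ψ'(x) = -(2π)^{-1/2} e^{-x²/2}`. -/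
noncomputable def PsiD1 (x : ℝ) : ℝ :=
  -((Real.sqrt (2 * Real.pi))⁻¹ * Real.exp (-x ^ 2 / 2))

noncomputable def K0 : ℝ := (Real.sqrt (2 * Real.pi))⁻¹

lemma K0_nonneg : 0 ≤ K0 := inv_nonneg.2 (Real.sqrt_nonneg _)

lemma K0_le_half : K0 ≤ 1 / 2 := by
  rw [K0]
  have h2 : (2:ℝ) ≤ Real.sqrt (2 * Real.pi) := by
    have : (4:ℝ) ≤ 2 * Real.pi := by nlinarith [Real.pi_gt_three]
    calc (2:ℝ) = Real.sqrt 4 := by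
          rw [show (4:ℝ) = 2^2 by norm_num, Real.sqrt_sq (by norm_num)]
      _ ≤ Real.sqrt (2 * Real.pi) := Real.sqrt_le_sqrt this
  rw [inv_le_comm₀ (by linarith) (by norm_num)]
  linarith

lemma gauss_cont : Continuous (fun t : ℝ => (Real.sqrt (2 * Real.pi))⁻¹ * Real.exp (-t ^ 2 / 2)) := by
  continuity

lemma gauss_integrable :
    Integrable (fun t : ℝ => (Real.sqrt (2 * Real.pi))⁻¹ * Real.exp (-t ^ 2 / 2)) := by
  have h : Integrable (fun t : ℝ => Real.exp (-(1/2) * t ^ 2)) :=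
    integrable_exp_neg_mul_sq (by norm_num)
  have h2 : Integrable (fun t : ℝ => Real.exp (-t ^ 2 / 2)) := by
    convert h using 2 with t
    ring_nf
  exact h2.const_mul _

lemma gauss_nonneg (t : ℝ) : 0 ≤ (Real.sqrt (2 * Real.pi))⁻¹ * Real.exp (-t ^ 2 / 2) :=
  mul_nonneg K0_nonneg (Real.exp_nonneg _)

lemma Psi_eq (y : ℝ) :
    Psi y = Psi 0 - ∫ t in (0:ℝ)..y, (Real.sqrt (2 * Real.pi))⁻¹ * Real.exp (-t ^ 2 / 2) := by
  set φ := fun t : ℝ => (Real.sqrt (2 * Real.pi))⁻¹ * Real.exp (-t ^ 2 / 2) with hφ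
  rcases le_or_gt 0 y with h | h
  · rw [intervalIntegral.integral_of_le h]
    have hsplit : ∫ t in Set.Ioi (0:ℝ), φ t
        = (∫ t in Set.Ioc (0:ℝ) y, φ t) + ∫ t in Set.Ioi y, φ t := by
      rw [← MeasureTheory.setIntegral_union (Set.Ioc_disjoint_Ioi le_rfl)
        measurableSet_Ioi gauss_integrable.integrableOn gauss_integrable.integrableOn,
        Set.Ioc_union_Ioi_eq_Ioi h]
    have : Psi 0 = (∫ t in Set.Ioc (0:ℝ) y, φ t) + Psi y := hsplit
    rw [MeasureTheory.integral_Ioc_eq_integral_Ioo] at this ⊢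
    linarith
  · rw [intervalIntegral.integral_of_ge h.le]
    have hsplit : ∫ t in Set.Ioi y, φ t
        = (∫ t in Set.Ioc y 0, φ t) + ∫ t in Set.Ioi (0:ℝ), φ t := by
      rw [← MeasureTheory.setIntegral_union (Set.Ioc_disjoint_Ioi le_rfl)
        measurableSet_Ioi gauss_integrable.integrableOn gauss_integrable.integrableOn,
        Set.Ioc_union_Ioi_eq_Ioi h.le]
    have : Psi y = (∫ t in Set.Ioc y 0, φ t) + Psi 0 := hsplit
    rw [MeasureTheory.integral_Ioc_eq_integral_Ioo] at this ⊢
    linarith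

lemma Psi_hasDerivAt (x : ℝ) : HasDerivAt Psi (PsiD1 x) x := by
  set φ := fun t : ℝ => (Real.sqrt (2 * Real.pi))⁻¹ * Real.exp (-t ^ 2 / 2) with hφ
  have hFTC : HasDerivAt (fun y => ∫ t in (0:ℝ)..y, φ t) (φ x) x :=
    intervalIntegral.integral_hasDerivAt_right
      (gauss_integrable.intervalIntegrable)
      gauss_cont.stronglyMeasurable.stronglyMeasurableAtFilter
      gauss_cont.continuousAt
  have h2 : HasDerivAt (fun y => Psi 0 - ∫ t in (0:ℝ)..y, φ t) (-(φ x)) x :=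
    hFTC.const_sub _
  have h3 : (fun y => Psi 0 - ∫ t in (0:ℝ)..y, φ t) = Psi := by
    funext y; rw [Psi_eq y]
  rw [h3] at h2
  exact h2

lemma abs_PsiD1_le (x : ℝ) : |PsiD1 x| ≤ K0 := by
  rw [PsiD1, abs_neg, abs_mul, abs_of_nonneg (inv_nonneg.2 (Real.sqrt_nonneg _)),
    abs_of_nonneg (Real.exp_nonneg _)]
  have : Real.exp (-x ^ 2 / 2) ≤ 1 := Real.exp_le_one_iff.2 (by nlinarith [sq_nonneg x])
  calc (Real.sqrt (2 * Real.pi))⁻¹ * Real.exp (-x ^ 2 / 2)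
      ≤ (Real.sqrt (2 * Real.pi))⁻¹ * 1 :=
        mul_le_mul_of_nonneg_left this (inv_nonneg.2 (Real.sqrt_nonneg _))
    _ = K0 := by rw [mul_one, K0]

lemma abs_mul_exp_le (x : ℝ) : |x| * Real.exp (-x ^ 2 / 2) ≤ 1 := by
  have hnn : 0 ≤ |x| * Real.exp (-x ^ 2 / 2) :=
    mul_nonneg (abs_nonneg _) (Real.exp_nonneg _)
  have hsq : (|x| * Real.exp (-x ^ 2 / 2)) ^ 2 ≤ 1 := by
    have h1 : (|x| * Real.exp (-x ^ 2 / 2)) ^ 2 = x ^ 2 * Real.exp (-x ^ 2) := by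
      have he : Real.exp (-x ^ 2 / 2) ^ 2 = Real.exp (-x ^ 2) := by
        rw [pow_two, ← Real.exp_add]; ring_nf
      rw [mul_pow, sq_abs, he]
    rw [h1]
    have h2 : x ^ 2 ≤ Real.exp (x ^ 2) := by
      nlinarith [Real.add_one_le_exp (x ^ 2)]
    calc x ^ 2 * Real.exp (-x ^ 2) ≤ Real.exp (x ^ 2) * Real.exp (-x ^ 2) :=
          mul_le_mul_of_nonneg_right h2 (Real.exp_nonneg _)
      _ = 1 := by rw [← Real.exp_add]; simp
  nlinarith

lemma PsiD1_hasDerivAt (x : ℝ) :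
    HasDerivAt PsiD1 ((Real.sqrt (2 * Real.pi))⁻¹ * (x * Real.exp (-x ^ 2 / 2))) x := by
  have h1 : HasDerivAt (fun y : ℝ => -y ^ 2 / 2) (-x) x := by
    have := ((hasDerivAt_pow 2 x).neg).div_const 2
    refine this.congr_deriv ?_
    norm_num; ring
  have h2 : HasDerivAt (fun y : ℝ => Real.exp (-y ^ 2 / 2)) (Real.exp (-x ^ 2 / 2) * (-x)) x :=
    (Real.hasDerivAt_exp _).comp x h1
  have h3 := (h2.const_mul ((Real.sqrt (2 * Real.pi))⁻¹)).neg
  refine h3.congr_deriv ?_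
  ring

lemma abs_PsiD1_sub_le (a b : ℝ) : |PsiD1 b - PsiD1 a| ≤ K0 * |b - a| := by
  have := Convex.norm_image_sub_le_of_norm_hasDerivWithin_le
    (f := PsiD1) (f' := fun t => (Real.sqrt (2 * Real.pi))⁻¹ * (t * Real.exp (-t ^ 2 / 2)))
    (s := Set.univ) (C := K0)
    (fun t _ => (PsiD1_hasDerivAt t).hasDerivWithinAt)
    (fun t _ => by
      rw [Real.norm_eq_abs, abs_mul, abs_of_nonneg (inv_nonneg.2 (Real.sqrt_nonneg _)), abs_mul,
        abs_of_nonneg (Real.exp_nonneg _)]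
      calc (Real.sqrt (2 * Real.pi))⁻¹ * (|t| * Real.exp (-t ^ 2 / 2))
          ≤ (Real.sqrt (2 * Real.pi))⁻¹ * 1 :=
            mul_le_mul_of_nonneg_left (abs_mul_exp_le t) (inv_nonneg.2 (Real.sqrt_nonneg _))
        _ = K0 := by rw [mul_one, K0])
    convex_univ (Set.mem_univ a) (Set.mem_univ b)
  simpa [Real.norm_eq_abs] using this

lemma abs_Psi_sub_le (a b : ℝ) : |Psi b - Psi a| ≤ K0 * |b - a| := by
  have := Convex.norm_image_sub_le_of_norm_hasDerivWithin_le
    (f := Psi) (f' := PsiD1) (s := Set.univ) (C := K0)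
    (fun t _ => (Psi_hasDerivAt t).hasDerivWithinAt)
    (fun t _ => by rw [Real.norm_eq_abs]; exact abs_PsiD1_le t)
    convex_univ (Set.mem_univ a) (Set.mem_univ b)
  simpa [Real.norm_eq_abs] using this

lemma Psi_antitone : Antitone Psi := by
  intro a b hab
  exact MeasureTheory.setIntegral_mono_set gauss_integrable.integrableOn
    (Filter.Eventually.of_forall fun t => gauss_nonneg t)
    (HasSubset.Subset.eventuallyLE (Set.Ioi_subset_Ioi hab))

lemma Psi_nonneg (x : ℝ) : 0 ≤ Psi x :=
  MeasureTheory.setIntegral_nonneg measurableSet_Ioi (fun t _ => gauss_nonneg t)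

lemma Psi_le (x : ℝ) :
    Psi x ≤ ∫ t : ℝ, (Real.sqrt (2 * Real.pi))⁻¹ * Real.exp (-t ^ 2 / 2) :=
  MeasureTheory.setIntegral_le_integral gauss_integrable
    (Filter.Eventually.of_forall fun t => gauss_nonneg t)

section Taylor
variable {σ ε u : ℝ}

lemma inner_hasDerivAt (hσ : 0 < σ) (u ε : ℝ) (y : ℝ) :
    HasDerivAt (fun y : ℝ => (u - ε * y) / σ) (-ε / σ) y := by
  have h := (((hasDerivAt_id y).const_mul ε).const_sub u).div_const σ
  simpa using h

lemma comp_hasDerivAt (hσ : 0 < σ) (u ε : ℝ) (y : ℝ) :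
    HasDerivAt (fun y : ℝ => Psi ((u - ε * y) / σ))
      (PsiD1 ((u - ε * y) / σ) * (-ε / σ)) y :=
  (Psi_hasDerivAt _).comp y (inner_hasDerivAt hσ u ε y)

/-- Linear-order estimate. -/
lemma est_lin (hσ : 0 < σ) (hε : 0 < ε) (u x : ℝ) :
    |Psi ((u - ε * x) / σ) - Psi (u / σ)| ≤ K0 * (ε / σ) * |x| := by
  have h := abs_Psi_sub_le (u / σ) ((u - ε * x) / σ)
  have heq : (u - ε * x) / σ - u / σ = -(ε * x) / σ := by ring
  rw [heq] at h
  calc |Psi ((u - ε * x) / σ) - Psi (u / σ)| ≤ K0 * |-(ε * x) / σ| := h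
    _ = K0 * (ε / σ) * |x| := by
        rw [abs_div, abs_neg, abs_mul, abs_of_pos hε, abs_of_pos hσ]; ring

/-- Quadratic Taylor estimate. -/
lemma est_quad (hσ : 0 < σ) (hε : 0 < ε) (u x : ℝ) :
    |Psi ((u - ε * x) / σ) - Psi (u / σ) - (-(ε / σ) * PsiD1 (u / σ)) * x|
      ≤ K0 * (ε / σ) ^ 2 * x ^ 2 := by
  set a : ℝ := -(ε / σ) * PsiD1 (u / σ) with ha
  set g : ℝ → ℝ := fun y => Psi ((u - ε * y) / σ) - Psi (u / σ) - a * y with hg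
  set g' : ℝ → ℝ := fun y => PsiD1 ((u - ε * y) / σ) * (-ε / σ) - a with hg'
  have hgd : ∀ y ∈ Set.uIcc (0:ℝ) x, HasDerivWithinAt g (g' y) (Set.uIcc (0:ℝ) x) y := by
    intro y _
    have h1 := comp_hasDerivAt hσ u ε y
    have h2 : HasDerivAt (fun y : ℝ => Psi (u / σ) + a * y) (a) y := by
      simpa using ((hasDerivAt_id y).const_mul a).const_add (Psi (u / σ))
    have h3 := h1.sub h2
    have : g = fun y => Psi ((u - ε * y) / σ) - (Psi (u / σ) + a * y) := by
      funext y; rw [hg]; ring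
    rw [this]
    exact h3.hasDerivWithinAt
  have hbound : ∀ y ∈ Set.uIcc (0:ℝ) x, ‖g' y‖ ≤ K0 * (ε / σ) ^ 2 * |x| := by
    intro y hy
    have hyx : |y| ≤ |x| := by
      rcases Set.mem_uIcc.1 hy with ⟨h1, h2⟩ | ⟨h1, h2⟩
      · rw [abs_of_nonneg h1]; exact le_trans h2 (le_abs_self x)
      · rw [abs_of_nonpos h2]; exact le_trans (neg_le_neg h1) (neg_le_abs x)
    have : g' y = (-ε / σ) * (PsiD1 ((u - ε * y) / σ) - PsiD1 (u / σ)) := by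
      rw [hg', ha]; ring
    rw [Real.norm_eq_abs, this, abs_mul]
    have h4 := abs_PsiD1_sub_le (u / σ) ((u - ε * y) / σ)
    have heq : (u - ε * y) / σ - u / σ = -(ε * y) / σ := by ring
    rw [heq] at h4
    have h5 : |(-(ε * y)) / σ| = (ε / σ) * |y| := by
      rw [abs_div, abs_neg, abs_mul, abs_of_pos hε, abs_of_pos hσ]; ring
    rw [h5] at h4
    have h6 : |(-ε) / σ| = ε / σ := by
      rw [abs_div, abs_neg, abs_of_pos hε, abs_of_pos hσ]
    rw [h6]
    have hεσ : 0 ≤ ε / σ := le_of_lt (div_pos hε hσ)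
    have h7 : |PsiD1 ((u - ε * y) / σ) - PsiD1 (u / σ)| ≤ K0 * (ε / σ * |x|) :=
      h4.trans (mul_le_mul_of_nonneg_left (mul_le_mul_of_nonneg_left hyx hεσ) K0_nonneg)
    calc ε / σ * |PsiD1 ((u - ε * y) / σ) - PsiD1 (u / σ)|
        ≤ ε / σ * (K0 * (ε / σ * |x|)) := mul_le_mul_of_nonneg_left h7 hεσ
      _ = K0 * (ε / σ) ^ 2 * |x| := by ring
  have key := Convex.norm_image_sub_le_of_norm_hasDerivWithin_le hgd hbound
    (convex_uIcc _ _) (Set.left_mem_uIcc) (Set.right_mem_uIcc)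
  have hg0 : g 0 = 0 := by rw [hg]; simp
  rw [hg0, sub_zero, sub_zero, Real.norm_eq_abs, Real.norm_eq_abs] at key
  calc |g x| ≤ K0 * (ε / σ) ^ 2 * |x| * |x| := key
    _ = K0 * (ε / σ) ^ 2 * x ^ 2 := by rw [mul_assoc, abs_mul_abs_self x, ← pow_two]

end Taylor

set_option maxHeartbeats 1000000 in
/-- Variance expansion of `Ψ((u − εX)/σ)` with cubic error. -/
theorem variance_gaussian_tail_expansion
    {Ω : Type*} [MeasurableSpace Ω] (P : Measure Ω) [IsProbabilityMeasure P]
    (X : Ω → ℝ) (hX_meas : Measurable X)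
    (hX_mean : ∫ ω, X ω ∂P = 0)
    (hX3 : Integrable (fun ω => |X ω| ^ 3) P)
    (σ : ℝ) (hσ : 0 < σ) (ε : ℝ) (hε : 0 < ε) (u : ℝ) :
    |variance (fun ω => Psi ((u - ε * X ω) / σ)) P
        - ε ^ 2 * (∫ ω, (X ω) ^ 2 ∂P) * (PsiD1 (u / σ)) ^ 2 / σ ^ 2|
      ≤ ε ^ 3 * (∫ ω, |X ω| ^ 3 ∂P) / σ ^ 3 := by
  set c : ℝ := Psi (u / σ) with hc
  set a : ℝ := -(ε / σ) * PsiD1 (u / σ) with ha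
  set F : Ω → ℝ := fun ω => Psi ((u - ε * X ω) / σ) with hF
  set R : Ω → ℝ := fun ω => Psi ((u - ε * X ω) / σ) - c - a * X ω with hRdef
  have hεσ : 0 < ε / σ := div_pos hε hσ
  -- measurability
  have hFmeas : Measurable F :=
    Psi_antitone.measurable.comp
      ((measurable_const.sub (hX_meas.const_mul ε)).div_const σ)
  have hRm : Measurable R :=
    (hFmeas.sub measurable_const).sub (hX_meas.const_mul a)
  -- boundedness of F, Memℒp
  have hMem : MemLp F 2 P := by
    refine MemLp.of_bound hFmeas.aestronglyMeasurable
      (∫ t : ℝ, (Real.sqrt (2 * Real.pi))⁻¹ * Real.exp (-t ^ 2 / 2))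
      (Filter.Eventually.of_forall fun ω => ?_)
    rw [Real.norm_eq_abs, abs_of_nonneg (Psi_nonneg _)]
    exact Psi_le _
  have hFint : Integrable F P := hMem.integrable one_le_two
  -- integrability of X, X^2
  have habs1 : ∀ x : ℝ, |x| ≤ 1 + |x| ^ 3 := fun x => by
    nlinarith [abs_nonneg x, mul_nonneg (abs_nonneg x) (sq_nonneg (|x| - 1)),
      sq_nonneg (2 * |x| - 1)]
  have habs2 : ∀ x : ℝ, x ^ 2 ≤ 1 + |x| ^ 3 := fun x => by
    have h := sq_abs x
    nlinarith [abs_nonneg x, mul_nonneg (mul_nonneg (abs_nonneg x) (abs_nonneg x)) (abs_nonneg x),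
      sq_nonneg (|x| - 1), sq_nonneg (|x| * (|x| - 1))]
  have hX1 : Integrable X P := by
    refine ((integrable_const (1:ℝ)).add hX3).mono' hX_meas.aestronglyMeasurable
      (Filter.Eventually.of_forall fun ω => ?_)
    rw [Real.norm_eq_abs]; exact habs1 (X ω)
  have hX2i : Integrable (fun ω => X ω ^ 2) P := by
    refine ((integrable_const (1:ℝ)).add hX3).mono'
      (hX_meas.pow_const 2).aestronglyMeasurable
      (Filter.Eventually.of_forall fun ω => ?_)
    rw [Real.norm_eq_abs, abs_of_nonneg (sq_nonneg _)]; exact habs2 (X ω)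
  have hRi : Integrable R P := (hFint.sub (integrable_const c)).sub (hX1.const_mul a)
  -- pointwise bounds on R
  have hRq : ∀ ω, |R ω| ≤ K0 * (ε / σ) ^ 2 * X ω ^ 2 := fun ω => est_quad hσ hε u (X ω)
  have haabs : |a| ≤ K0 * (ε / σ) := by
    rw [ha, abs_mul, abs_neg, abs_of_pos hεσ]
    calc ε / σ * |PsiD1 (u / σ)| ≤ ε / σ * K0 :=
          mul_le_mul_of_nonneg_left (abs_PsiD1_le _) hεσ.le
      _ = K0 * (ε / σ) := by ring
  have hRl : ∀ ω, |R ω| ≤ 2 * K0 * (ε / σ) * |X ω| := by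
    intro ω
    have h1 := est_lin hσ hε u (X ω)
    have h2 : |R ω| ≤ |Psi ((u - ε * X ω) / σ) - c| + |a| * |X ω| := by
      rw [hRdef]
      calc |Psi ((u - ε * X ω) / σ) - c - a * X ω|
          ≤ |Psi ((u - ε * X ω) / σ) - c| + |a * X ω| := abs_sub _ _
        _ = |Psi ((u - ε * X ω) / σ) - c| + |a| * |X ω| := by rw [abs_mul]
    have h3 : |a| * |X ω| ≤ K0 * (ε / σ) * |X ω| :=
      mul_le_mul_of_nonneg_right haabs (abs_nonneg _)
    calc |R ω| ≤ K0 * (ε / σ) * |X ω| + K0 * (ε / σ) * |X ω| := by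
          rw [← hc] at h1; linarith
      _ = 2 * K0 * (ε / σ) * |X ω| := by ring
  -- integrability of X*R and R^2
  have hXRb : ∀ ω, |X ω * R ω| ≤ K0 * (ε / σ) ^ 2 * |X ω| ^ 3 := by
    intro ω
    rw [abs_mul]
    calc |X ω| * |R ω| ≤ |X ω| * (K0 * (ε / σ) ^ 2 * X ω ^ 2) :=
          mul_le_mul_of_nonneg_left (hRq ω) (abs_nonneg _)
      _ = K0 * (ε / σ) ^ 2 * |X ω| ^ 3 := by
          rw [show |X ω| ^ 3 = X ω ^ 2 * |X ω| by rw [pow_succ, sq_abs]]; ring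
  have hR2b : ∀ ω, R ω ^ 2 ≤ 2 * K0 ^ 2 * (ε / σ) ^ 3 * |X ω| ^ 3 := by
    intro ω
    have h0 : R ω ^ 2 = |R ω| * |R ω| := by rw [pow_two, ← abs_mul_abs_self]
    rw [h0]
    calc |R ω| * |R ω| ≤ (2 * K0 * (ε / σ) * |X ω|) * (K0 * (ε / σ) ^ 2 * X ω ^ 2) :=
          mul_le_mul (hRl ω) (hRq ω) (abs_nonneg _)
            (by
              have : (0:ℝ) ≤ 2 * K0 * (ε / σ) := by
                have := K0_nonneg; nlinarith
              exact mul_nonneg this (abs_nonneg _))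
      _ = 2 * K0 ^ 2 * (ε / σ) ^ 3 * |X ω| ^ 3 := by
          rw [show |X ω| ^ 3 = X ω ^ 2 * |X ω| by rw [pow_succ, sq_abs]]; ring
  have hXR : Integrable (fun ω => X ω * R ω) P := by
    refine (hX3.const_mul (K0 * (ε / σ) ^ 2)).mono'
      (hX_meas.mul hRm).aestronglyMeasurable
      (Filter.Eventually.of_forall fun ω => ?_)
    rw [Real.norm_eq_abs]; exact hXRb ω
  have hR2 : Integrable (fun ω => R ω ^ 2) P := by
    refine (hX3.const_mul (2 * K0 ^ 2 * (ε / σ) ^ 3)).mono'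
      (hRm.pow_const 2).aestronglyMeasurable
      (Filter.Eventually.of_forall fun ω => ?_)
    rw [Real.norm_eq_abs, abs_of_nonneg (sq_nonneg _)]; exact hR2b ω
  -- notation for integrals
  set M3 : ℝ := ∫ ω, |X ω| ^ 3 ∂P with hM3
  set IXR : ℝ := ∫ ω, X ω * R ω ∂P with hIXRdef
  set IR : ℝ := ∫ ω, R ω ∂P with hIRdef
  set IR2 : ℝ := ∫ ω, R ω ^ 2 ∂P with hIR2def
  set IX2 : ℝ := ∫ ω, X ω ^ 2 ∂P with hIX2def
  have hM3nn : 0 ≤ M3 := integral_nonneg fun ω => by positivity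
  -- integral bounds
  have hIXR : |IXR| ≤ K0 * (ε / σ) ^ 2 * M3 := by
    calc |IXR| ≤ ∫ ω, |X ω * R ω| ∂P := by
          rw [hIXRdef]
          simpa [Real.norm_eq_abs, abs_mul] using
            norm_integral_le_integral_norm (μ := P) (fun ω => X ω * R ω)
      _ ≤ ∫ ω, K0 * (ε / σ) ^ 2 * |X ω| ^ 3 ∂P :=
          integral_mono hXR.abs (hX3.const_mul _) hXRb
      _ = K0 * (ε / σ) ^ 2 * M3 := by rw [integral_const_mul]
  have hIR2 : IR2 ≤ 2 * K0 ^ 2 * (ε / σ) ^ 3 * M3 := by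
    calc IR2 ≤ ∫ ω, 2 * K0 ^ 2 * (ε / σ) ^ 3 * |X ω| ^ 3 ∂P :=
          integral_mono hR2 (hX3.const_mul _) hR2b
      _ = 2 * K0 ^ 2 * (ε / σ) ^ 3 * M3 := by rw [integral_const_mul]
  -- (∫R)^2 ≤ ∫R^2
  have hJensen : IR ^ 2 ≤ IR2 := by
    have hnn : 0 ≤ ∫ ω, (R ω - IR) ^ 2 ∂P := integral_nonneg fun ω => sq_nonneg _
    have hexp : ∫ ω, (R ω - IR) ^ 2 ∂P = IR2 - IR ^ 2 := by
      have hA : Integrable (fun ω => R ω ^ 2 - 2 * IR * R ω) P := by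
        exact hR2.sub (hRi.const_mul (2 * IR))
      have heq : ∫ ω, (R ω - IR) ^ 2 ∂P
          = ∫ ω, (R ω ^ 2 - 2 * IR * R ω) + IR ^ 2 ∂P :=
        integral_congr_ae (Filter.Eventually.of_forall fun ω => by ring)
      rw [heq, integral_add hA (integrable_const _),
        integral_sub hR2 (hRi.const_mul (2 * IR)), integral_const_mul, integral_const]
      simp [measure_univ]
      ring
    linarith
  -- variance expansion
  have hVar : variance F P = (∫ ω, F ω ^ 2 ∂P) - (∫ ω, F ω ∂P) ^ 2 := by
    have h := variance_eq_sub hMem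
    simp only [Pi.pow_apply] at h
    exact h
  have hIF : ∫ ω, F ω ∂P = c + IR := by
    have hI12 : Integrable (fun ω => c + a * X ω) P := by
      exact (integrable_const c).add (hX1.const_mul a)
    have hFeq : ∫ ω, F ω ∂P = ∫ ω, (c + a * X ω) + R ω ∂P :=
      integral_congr_ae (Filter.Eventually.of_forall fun ω => by
        simp only [hF, hRdef]; ring)
    rw [hFeq, integral_add hI12 hRi,
      integral_add (integrable_const c) (hX1.const_mul a), integral_const,
      integral_const_mul, hX_mean]
    simp [measure_univ]
    rfl
  have hIF2 : ∫ ω, F ω ^ 2 ∂P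
      = (c ^ 2 + ((2 * c * a) * 0 + a ^ 2 * IX2))
        + ((2 * c) * IR + ((2 * a) * IXR + IR2)) := by
    have hF2eq : ∫ ω, F ω ^ 2 ∂P
        = ∫ ω, (c ^ 2 + (2 * c * a * X ω + a ^ 2 * X ω ^ 2))
            + (2 * c * R ω + (2 * a * (X ω * R ω) + R ω ^ 2)) ∂P :=
      integral_congr_ae (Filter.Eventually.of_forall fun ω => by
        simp only [hF, hRdef]; ring)
    have hI1b : Integrable (fun ω => 2 * c * a * X ω + a ^ 2 * X ω ^ 2) P := by
      exact (hX1.const_mul (2 * c * a)).add (hX2i.const_mul (a ^ 2))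
    have hI2b : Integrable (fun ω => 2 * a * (X ω * R ω) + R ω ^ 2) P := by
      exact (hXR.const_mul (2 * a)).add hR2
    have hI1 : Integrable (fun ω => c ^ 2 + (2 * c * a * X ω + a ^ 2 * X ω ^ 2)) P := by
      exact (integrable_const (c ^ 2)).add hI1b
    have hI2 : Integrable (fun ω => 2 * c * R ω + (2 * a * (X ω * R ω) + R ω ^ 2)) P := by
      exact (hRi.const_mul (2 * c)).add hI2b
    rw [hF2eq, integral_add hI1 hI2,
      integral_add (integrable_const _) hI1b,
      integral_add (hX1.const_mul (2 * c * a)) (hX2i.const_mul (a ^ 2)),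
      integral_add (hRi.const_mul (2 * c)) hI2b,
      integral_add (hXR.const_mul (2 * a)) hR2,
      integral_const, integral_const_mul, integral_const_mul, integral_const_mul,
      integral_const_mul, hX_mean]
    simp [measure_univ]
    rfl
  have hVarEq : variance F P = a ^ 2 * IX2 + (2 * a * IXR + (IR2 - IR ^ 2)) := by
    rw [hVar, hIF2, hIF]; ring
  have ha2 : ε ^ 2 * IX2 * (PsiD1 (u / σ)) ^ 2 / σ ^ 2 = a ^ 2 * IX2 := by
    rw [ha]; field_simp
  rw [hVarEq, ha2]
  rw [show a ^ 2 * IX2 + (2 * a * IXR + (IR2 - IR ^ 2)) - a ^ 2 * IX2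
      = 2 * a * IXR + (IR2 - IR ^ 2) by ring]
  have hDnn : 0 ≤ IR2 - IR ^ 2 := by linarith
  have habs : |2 * a * IXR + (IR2 - IR ^ 2)| ≤ 2 * |a| * |IXR| + (IR2 - IR ^ 2) := by
    calc |2 * a * IXR + (IR2 - IR ^ 2)| ≤ |2 * a * IXR| + |IR2 - IR ^ 2| := abs_add_le _ _
      _ = 2 * |a| * |IXR| + (IR2 - IR ^ 2) := by
          rw [abs_mul, abs_mul, abs_two, abs_of_nonneg hDnn]
  have h1 : |a| * |IXR| ≤ (K0 * (ε / σ)) * (K0 * (ε / σ) ^ 2 * M3) :=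
    mul_le_mul haabs hIXR (abs_nonneg _) (mul_nonneg K0_nonneg hεσ.le)
  have hD2 : IR2 - IR ^ 2 ≤ 2 * K0 ^ 2 * (ε / σ) ^ 3 * M3 := by
    nlinarith [sq_nonneg IR]
  have hfinal : 2 * |a| * |IXR| + (IR2 - IR ^ 2) ≤ 4 * K0 ^ 2 * (ε / σ) ^ 3 * M3 := by
    nlinarith
  have hle1 : 4 * K0 ^ 2 * (ε / σ) ^ 3 * M3 ≤ (ε / σ) ^ 3 * M3 := by
    have hA : 0 ≤ (ε / σ) ^ 3 * M3 := mul_nonneg (pow_nonneg hεσ.le 3) hM3nn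
    have hK2 : (0:ℝ) ≤ 1 / 4 - K0 ^ 2 := by nlinarith [K0_nonneg, K0_le_half]
    nlinarith [mul_nonneg hK2 hA]
  have hconv : (ε / σ) ^ 3 * M3 = ε ^ 3 * M3 / σ ^ 3 := by
    rw [div_pow]; ring
  linarith [habs.trans (hfinal.trans (hle1.trans_eq hconv))]
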